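/- arXiv:2001.10087 — 7 statements merged into one kernel-verified Lean document; each statement's English description precedes it below -/
import Mathlib

section
/- In the gadget instance, for every matching M the following holds: if M(a) = {r2}, M(b) = {r1, r3}, and |M(w) ∩ U| = q_w for every w ∈ W, then no pair {u, w} with u ∈ {r1, r2, r3} and w ∈ {a, b}, and no pair {r2, w} with w ∈ W, is a blocking pair of M. -/
open scoped Classical

noncomputable section

/-- An SMTI-Diverse instance: students `S`, colleges `C`, types `T`.
Preferences are encoded by rank functions (smaller rank = more preferred);
ties are allowed.  `acc` is the (symmetric) acceptability relation, `tau`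
the 0/1 type vectors (encoded as `Bool`), `lq`/`uq` the lower/upper quota
vectors and `cap` the capacities. -/
structure SMTI (S C T : Type) [Fintype S] [Fintype C] [Fintype T] where
  acc : S → C → Prop
  tau : S → T → Bool
  rankS : S → C → ℕ
  rankC : C → S → ℕ
  lq : C → T → ℕ
  uq : C → T → ℕ
  cap : C → ℕ

namespace SMTI

variable {S C T : Type} [Fintype S] [Fintype C] [Fintype T]

/-- `f : S → Option C` encodes a matching: every assigned college is acceptable. -/
def IsMatching (I : SMTI S C T) (f : S → Option C) : Prop :=
  ∀ u w, f u = some w → I.acc u w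

/-- The set `M(w)` of students assigned to college `w`. -/
def assigned (I : SMTI S C T) (f : S → Option C) (w : C) : Finset S :=
  Finset.univ.filter fun u => f u = some w

/-- The number of students of type `z` assigned to `w`. -/
def typeLoad (I : SMTI S C T) (f : S → Option C) (w : C) (z : T) : ℕ :=
  ∑ u ∈ I.assigned f w, (I.tau u z).toNat

/-- Feasibility: capacities respected and quotas met at all colleges. -/
def Feasible (I : SMTI S C T) (f : S → Option C) : Prop :=
  ∀ w, (I.assigned f w).card ≤ I.cap w ∧
    ∀ z, I.lq w z ≤ I.typeLoad f w z ∧ I.typeLoad f w z ≤ I.uq w z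

/-- `u` strictly prefers `w` to its assigned college (in particular if unmatched). -/
def PrefersTo (I : SMTI S C T) (f : S → Option C) (u : S) (w : C) : Prop :=
  ∀ w', f u = some w' → I.rankS u w < I.rankS u w'

/-- `{u,w}` is a blocking pair of `f` witnessed by `U' ⊆ M(w)`. -/
def BlocksWith (I : SMTI S C T) (f : S → Option C) (u : S) (w : C) (U' : Finset S) : Prop :=
  f u ≠ some w ∧ I.acc u w ∧ I.PrefersTo f u w ∧
  U' ⊆ I.assigned f w ∧
  (∀ u' ∈ U', I.rankC w u < I.rankC w u') ∧
  (I.assigned f w \ U').card + 1 ≤ I.cap w ∧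
  ∀ z, I.lq w z ≤ (I.tau u z).toNat + ∑ u' ∈ I.assigned f w \ U', (I.tau u' z).toNat ∧
    (I.tau u z).toNat + ∑ u' ∈ I.assigned f w \ U', (I.tau u' z).toNat ≤ I.uq w z

/-- `{u,w}` is a blocking pair of `f` (with some witness). -/
def BlockingPair (I : SMTI S C T) (f : S → Option C) (u : S) (w : C) : Prop :=
  ∃ U', I.BlocksWith f u w U'

/-- Stability: no blocking pair at all. -/
def Stable (I : SMTI S C T) (f : S → Option C) : Prop :=
  ∀ u w, ¬ I.BlockingPair f u w

end SMTI

section Gadget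

/-- Students of the gadget: the students of `U` plus `r1, r2, r3`. -/
abbrev GSt (U : Type) := U ⊕ Fin 3
/-- Colleges of the gadget: the colleges of `W` plus `a, b`. -/
abbrev GCo (W : Type) := W ⊕ Fin 2

variable {U W : Type} [Fintype U] [Fintype W]

def gr1 : GSt U := Sum.inr 0
def gr2 : GSt U := Sum.inr 1
def gr3 : GSt U := Sum.inr 2
def ga : GCo W := Sum.inr 0
def gb : GCo W := Sum.inr 1

/-- The hypotheses describing the gadget instance of Lemma 1 (two types;
`τ_u = 00` for `u ∈ U`, `τ_{r1} = 10`, `τ_{r2} = 11`, `τ_{r3} = 01`; all lower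
quotas zero; strict preferences `r1 : b ≻ a`, `r2 : b ≻ [W] ≻ a`, `r3 : a ≻ b`;
every `w ∈ W` ranks its acceptable `U`-students (in an arbitrary fixed strict
order) before `r2` and has upper quotas `(1,1)` and capacity `q_w`;
`a : r1 ≻ r2 ≻ r3` with upper quotas `(1,1)` and capacity `1`;
`b : r3 ≻ r2 ≻ r1` with upper quotas `(1,1)` and capacity `2`). -/
structure GadgetHyps (I : SMTI (GSt U) (GCo W) (Fin 2)) : Prop where
  tauU : ∀ (u : U) (z : Fin 2), I.tau (Sum.inl u) z = false
  tauR1 : I.tau gr1 0 = true ∧ I.tau gr1 1 = false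
  tauR2 : I.tau gr2 0 = true ∧ I.tau gr2 1 = true
  tauR3 : I.tau gr3 0 = false ∧ I.tau gr3 1 = true
  lqZero : ∀ c z, I.lq c z = 0
  accR1 : ∀ c, I.acc gr1 c ↔ (c = ga ∨ c = gb)
  accR2 : ∀ c, I.acc gr2 c
  accR3 : ∀ c, I.acc gr3 c ↔ (c = ga ∨ c = gb)
  accU : ∀ (u : U) (c : GCo W), I.acc (Sum.inl u) c → ∃ w : W, c = Sum.inl w
  rkR1 : I.rankS gr1 gb < I.rankS gr1 ga
  rkR2 : ∀ w : W, I.rankS gr2 gb < I.rankS gr2 (Sum.inl w) ∧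
      I.rankS gr2 (Sum.inl w) < I.rankS gr2 ga
  rkR3 : I.rankS gr3 ga < I.rankS gr3 gb
  strictS : ∀ (s : GSt U) (c c' : GCo W), I.acc s c → I.acc s c' →
      I.rankS s c = I.rankS s c' → c = c'
  strictC : ∀ (c : GCo W) (s s' : GSt U), I.acc s c → I.acc s' c →
      I.rankC c s = I.rankC c s' → s = s'
  rkW : ∀ (w : W) (u : U), I.acc (Sum.inl u) (Sum.inl w) →
      I.rankC (Sum.inl w) (Sum.inl u) < I.rankC (Sum.inl w) gr2
  rkA : I.rankC ga gr1 < I.rankC ga gr2 ∧ I.rankC ga gr2 < I.rankC ga gr3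
  rkB : I.rankC gb gr3 < I.rankC gb gr2 ∧ I.rankC gb gr2 < I.rankC gb gr1
  uqW : ∀ (w : W) (z : Fin 2), I.uq (Sum.inl w) z = 1
  uqA : ∀ z, I.uq ga z = 1
  uqB : ∀ z, I.uq gb z = 1
  capA : I.cap ga = 1
  capB : I.cap gb = 2

end Gadget

/-!
Each of the listed pairs fails for one of three reasons. For `{r1, a}` and every pair whose
student is already matched to that college, the student does not strictly prefer the
college. For `{r3, a}` and `{r2, w}` with `w ∈ W`, the college is full and prefers all of
its current students to the applicant, so the witness must be empty and the capacity is
exceeded. For `{r2, b}`, college `b` prefers `r3` to `r2`, so `r3` stays, and `r2` and `r3`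
together exceed the upper quota of the second type at `b`.
-/

namespace SMTI

variable {S C T : Type} [Fintype S] [Fintype C] [Fintype T] (I : SMTI S C T)
  {f : S → Option C} {u v : S} {w : C}

@[simp]
theorem mem_assigned : v ∈ I.assigned f w ↔ f v = some w := by
  simp [assigned]

theorem not_blockingPair_of_rankS_le {w' : C} (hw' : f u = some w')
    (hle : I.rankS u w' ≤ I.rankS u w) : ¬ I.BlockingPair f u w := by
  rintro ⟨_, -, -, hpref, -⟩
  exact (hpref w' hw').not_ge hle

theorem not_blockingPair_of_cap_le_card (hcap : I.cap w ≤ (I.assigned f w).card)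
    (hworse : ∀ v ∈ I.assigned f w, I.rankC w v ≤ I.rankC w u) :
    ¬ I.BlockingPair f u w := by
  rintro ⟨U', -, -, -, hsub, hrank, hcard, -⟩
  have hU' : U' = ∅ := Finset.eq_empty_of_forall_notMem fun v hv =>
    (hrank v hv).not_ge (hworse v (hsub hv))
  rw [hU', Finset.sdiff_empty] at hcard
  omega

theorem not_blockingPair_of_shared_type {z : T} (hv : v ∈ I.assigned f w)
    (hvu : I.rankC w v ≤ I.rankC w u) (hu : I.tau u z = true) (hvz : I.tau v z = true)
    (huq : I.uq w z ≤ 1) : ¬ I.BlockingPair f u w := by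
  rintro ⟨U', -, -, -, -, hrank, -, hquota⟩
  have hv' : v ∈ I.assigned f w \ U' :=
    Finset.mem_sdiff.2 ⟨hv, fun hvU' => (hrank v hvU').not_ge hvu⟩
  have hload : 1 ≤ ∑ u' ∈ I.assigned f w \ U', (I.tau u' z).toNat := by
    simpa [hvz] using Finset.single_le_sum (f := fun u' => (I.tau u' z).toNat)
      (fun _ _ => Nat.zero_le _) hv'
  have hupper := (hquota z).2
  rw [hu, Bool.toNat_true] at hupper
  omega

theorem exists_eq_inl_of_mem_assigned_inl {R D : Type} [Fintype R] [Fintype D]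
    {I : SMTI (S ⊕ R) (C ⊕ D) T} {f : S ⊕ R → Option (C ⊕ D)}
    (hinr : ∀ r, ∃ d, f (Sum.inr r) = some (Sum.inr d)) {w : C} {v : S ⊕ R}
    (hv : v ∈ I.assigned f (Sum.inl w)) : ∃ u, v = Sum.inl u := by
  rcases v with u | r
  · exact ⟨u, rfl⟩
  · obtain ⟨d, hd⟩ := hinr r
    rw [mem_assigned, hd] at hv
    simp at hv

end SMTI

/-- Lemma 1(1).  In the gadget instance: if `M(a) = {r2}`,
`M(b) = {r1, r3}` and `|M(w) ∩ U| = q_w` for all `w ∈ W`, then no pair `{u,w}`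
with `u ∈ {r1,r2,r3}` and `w ∈ {a,b}`, and no pair `{r2, w}` with `w ∈ W`,
is a blocking pair of `M`. -/
theorem stmt0 {U W : Type} [Fintype U] [Fintype W]
    (I : SMTI (GSt U) (GCo W) (Fin 2)) (h : GadgetHyps I)
    (f : GSt U → Option (GCo W)) (hM : I.IsMatching f)
    (ha : I.assigned f ga = {gr2})
    (hb : I.assigned f gb = {gr1, gr3})
    (hfull : ∀ w : W,
      ((I.assigned f (Sum.inl w)).filter fun st => ∃ u : U, st = Sum.inl u).card
        = I.cap (Sum.inl w)) :
    (∀ (i : Fin 3) (c : Fin 2),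
        ¬ I.BlockingPair f (Sum.inr i : GSt U) (Sum.inr c : GCo W)) ∧
    (∀ w : W, ¬ I.BlockingPair f gr2 (Sum.inl w)) := by
  have hr1 : f gr1 = some gb := (I.mem_assigned).1 (hb ▸ Finset.mem_insert_self _ _)
  have hr2 : f gr2 = some ga := (I.mem_assigned).1 (ha ▸ Finset.mem_singleton_self _)
  have hr3mem : gr3 ∈ I.assigned f gb :=
    hb ▸ Finset.mem_insert_of_mem (Finset.mem_singleton_self _)
  have hr3 : f gr3 = some gb := (I.mem_assigned).1 hr3mem
  refine ⟨fun i c => ?_, fun w => ?_⟩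
  · fin_cases i <;> fin_cases c
    · exact I.not_blockingPair_of_rankS_le hr1 h.rkR1.le
    · exact I.not_blockingPair_of_rankS_le hr1 le_rfl
    · exact I.not_blockingPair_of_rankS_le hr2 le_rfl
    · exact I.not_blockingPair_of_shared_type hr3mem h.rkB.1.le h.tauR2.2 h.tauR3.2
        (h.uqB 1).le
    · change ¬ I.BlockingPair f gr3 ga
      refine I.not_blockingPair_of_cap_le_card (by simp [ha, h.capA]) ?_
      simpa [ha] using h.rkA.2.le
    · exact I.not_blockingPair_of_rankS_le hr3 le_rfl
  · have hinr : ∀ i : Fin 3, ∃ c, f (Sum.inr i) = some (Sum.inr c) := by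
      intro i
      fin_cases i
      exacts [⟨1, hr1⟩, ⟨0, hr2⟩, ⟨1, hr3⟩]
    have hU := fun v (hv : v ∈ I.assigned f (Sum.inl w)) =>
      SMTI.exists_eq_inl_of_mem_assigned_inl hinr hv
    refine I.not_blockingPair_of_cap_le_card ?_ fun v hv => ?_
    · rw [← hfull w, Finset.filter_true_of_mem hU]
    · obtain ⟨u, rfl⟩ := hU v hv
      exact (h.rkW w u (hM _ _ ((I.mem_assigned).1 hv))).le
end
end

section
/- In the RX3C construction, the feasible matching M that assigns every set-student to w and leaves d unmatched admits a blocking pair if and only if S contains an exact cover of X. -/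
open scoped Classical

noncomputable section

section RX3C

variable {X : Type} [Fintype X]

/-- Students of the RX3C construction: one set-student per member of `SS`,
plus the special student `d` (`Sum.inr ()`). -/
abbrev RSt (SS : Finset (Finset X)) := {A : Finset X // A ∈ SS} ⊕ Unit

/-- The hypotheses describing the RX3C construction: a single college (`Unit`)
acceptable to everybody, types identified with `X`, `τ_{s_S}[x] = 1` iff `x ∈ S`,
`τ_d ≡ 1`, the college ranks `d` first followed by the set-students in an arbitrary
fixed strict order, `ℓ_w[x] = u_w[x] = 3` for all `x`, and `q_w = |SS|`. -/
structure RX3CHyps (SS : Finset (Finset X)) (I : SMTI (RSt SS) Unit X) : Prop where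
  accAll : ∀ st : RSt SS, I.acc st ()
  tauSet : ∀ (A : {A : Finset X // A ∈ SS}) (x : X),
      I.tau (Sum.inl A) x = true ↔ x ∈ A.1
  tauD : ∀ x : X, I.tau (Sum.inr ()) x = true
  rkDFirst : ∀ A : {A : Finset X // A ∈ SS},
      I.rankC () (Sum.inr ()) < I.rankC () (Sum.inl A)
  rkStrict : ∀ s s' : RSt SS, I.rankC () s = I.rankC () s' → s = s'
  lq3 : ∀ x : X, I.lq () x = 3
  uq3 : ∀ x : X, I.uq () x = 3
  capAll : I.cap () = SS.card

end RX3C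

/-!
Since `d` is ranked first and every set-student is already at `w`, a blocking pair must be
`{d, w}`, and a witness `U'` is just a set of set-students to evict. The full assignment covers
each `x ∈ X` exactly three times and `d` covers it once more, so the quota `ℓ_w = u_w = 3` holds
after admitting `d` iff the evicted sets cover each `x` exactly once, i.e. form an exact cover;
the capacity then only asks `U'` to be nonempty, which an exact cover of a nonempty `X` is.
-/

open Finset

namespace SMTI

variable {S C T : Type} [Fintype S] [Fintype C] [Fintype T]

theorem blocksWith_iff_of_unmatched (I : SMTI S C T) {f : S → Option C}
    {u : S} {w : C} {U' : Finset S} (hu : f u = none) (hacc : I.acc u w)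
    (hrank : ∀ u' ∈ I.assigned f w, I.rankC w u < I.rankC w u') :
    I.BlocksWith f u w U' ↔
      U' ⊆ I.assigned f w ∧ #(I.assigned f w \ U') + 1 ≤ I.cap w ∧
        ∀ z, I.lq w z ≤ (I.tau u z).toNat + ∑ u' ∈ I.assigned f w \ U', (I.tau u' z).toNat ∧
          (I.tau u z).toNat + ∑ u' ∈ I.assigned f w \ U', (I.tau u' z).toNat ≤ I.uq w z := by
  constructor
  · rintro ⟨-, -, -, hsub, -, hcap, hquota⟩
    exact ⟨hsub, hcap, hquota⟩
  · rintro ⟨hsub, hcap, hquota⟩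
    refine ⟨by simp [hu], hacc, fun w' h => by simp [hu] at h, hsub,
      fun u' hu' => hrank u' (hsub hu'), hcap, hquota⟩

end SMTI

namespace RX3CHyps

variable {X : Type} [Fintype X] {SS : Finset (Finset X)} {I : SMTI (RSt SS) Unit X}
  {f : RSt SS → Option Unit}

theorem assigned_eq (hfSet : ∀ A : {A : Finset X // A ∈ SS}, f (Sum.inl A) = some ())
    (hfD : f (Sum.inr ()) = none) :
    I.assigned f () = univ.map Function.Embedding.inl := by
  ext (A | ⟨⟩) <;> simp [SMTI.assigned, hfSet, hfD]

theorem tau_inl_toNat (hI : RX3CHyps SS I) (A : {A : Finset X // A ∈ SS}) (x : X) :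
    (I.tau (Sum.inl A) x).toNat = if x ∈ A.1 then 1 else 0 := by
  by_cases hx : x ∈ A.1
  · simp [hx, (hI.tauSet A x).2 hx]
  · simp [hx, mt (hI.tauSet A x).1 hx]

theorem sum_tau_map_inl (hI : RX3CHyps SS I) (V : Finset {A : Finset X // A ∈ SS}) (x : X) :
    ∑ s ∈ V.map Function.Embedding.inl, (I.tau s x).toNat =
      #((V.map (Function.Embedding.subtype (· ∈ SS))).filter (x ∈ ·)) := by
  simp only [sum_map, Function.Embedding.inl_apply, hI.tau_inl_toNat, sum_boole,
    filter_map, card_map, Nat.cast_id]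
  rfl

theorem typeLoad_eq_three (hI : RX3CHyps SS I)
    (hocc : ∀ x : X, (SS.filter fun A => x ∈ A).card = 3)
    (hfSet : ∀ A : {A : Finset X // A ∈ SS}, f (Sum.inl A) = some ())
    (hfD : f (Sum.inr ()) = none) (x : X) :
    I.typeLoad f () x = 3 := by
  rw [SMTI.typeLoad, assigned_eq hfSet hfD, hI.sum_tau_map_inl, univ_eq_attach, attach_map_val,
    hocc]

theorem blocksWith_iff_exactCover (hI : RX3CHyps SS I)
    (hocc : ∀ x : X, (SS.filter fun A => x ∈ A).card = 3)
    (hfSet : ∀ A : {A : Finset X // A ∈ SS}, f (Sum.inl A) = some ())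
    (hfD : f (Sum.inr ()) = none) (V : Finset {A : Finset X // A ∈ SS}) :
    I.BlocksWith f (Sum.inr ()) () (V.map Function.Embedding.inl) ↔
      V.Nonempty ∧
        ∀ x, #((V.map (Function.Embedding.subtype (· ∈ SS))).filter (x ∈ ·)) = 1 := by
  -- `BlocksWith` elaborates `\` with the classical instance, not the one derived for `Sum`.
  let _ : DecidableEq (RSt SS) := fun a b => Classical.propDecidable (a = b)
  have hM := assigned_eq (I := I) hfSet hfD
  have hsub : V.map Function.Embedding.inl ⊆ I.assigned f () := by
    rw [hM]; exact map_subset_map.2 (subset_univ V)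
  have hrank : ∀ u' ∈ I.assigned f (), I.rankC () (Sum.inr ()) < I.rankC () u' := by
    rw [hM]
    rintro _ hu'
    obtain ⟨A, -, rfl⟩ := mem_map.1 hu'
    exact hI.rkDFirst A
  rw [I.blocksWith_iff_of_unmatched hfD (hI.accAll _) hrank]
  have hcard : #(I.assigned f () \ V.map Function.Embedding.inl) = #SS - #V := by
    rw [card_sdiff_of_subset hsub, hM, card_map, card_map, card_univ, Fintype.card_coe]
  have hVcard : #V ≤ #SS := by simpa using card_le_univ V
  have hload (x : X) : ∑ u' ∈ I.assigned f () \ V.map Function.Embedding.inl,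
      (I.tau u' x).toNat + #((V.map (Function.Embedding.subtype (· ∈ SS))).filter (x ∈ ·)) = 3 := by
    rw [← hI.sum_tau_map_inl, sum_sdiff hsub]
    exact typeLoad_eq_three hI hocc hfSet hfD x
  simp only [hsub, true_and, hcard, hI.capAll, hI.lq3, hI.uq3, hI.tauD, Bool.toNat_true,
    ← card_pos]
  refine and_congr (by omega) (forall_congr' fun x => ?_)
  have := hload x
  omega

theorem exists_blockingPair_iff
    (hfSet : ∀ A : {A : Finset X // A ∈ SS}, f (Sum.inl A) = some ())
    (hfD : f (Sum.inr ()) = none) :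
    (∃ (u : RSt SS) (w : Unit), I.BlockingPair f u w) ↔
      ∃ V : Finset {A : Finset X // A ∈ SS},
        I.BlocksWith f (Sum.inr ()) () (V.map Function.Embedding.inl) := by
  constructor
  · rintro ⟨A | ⟨⟩, ⟨⟩, U', hU'⟩
    · exact absurd (hfSet A) hU'.1
    · obtain ⟨V, -, rfl⟩ := subset_map_iff.1 (assigned_eq hfSet hfD ▸ hU'.2.2.2.1)
      exact ⟨V, hU'⟩
  · rintro ⟨V, hV⟩
    exact ⟨_, _, _, hV⟩

end RX3CHyps

theorem stmt2_general {X : Type} [Fintype X] (q : ℕ) (hq : 1 ≤ q)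
    (hX : Fintype.card X = 3 * q)
    (SS : Finset (Finset X))
    (hocc : ∀ x : X, (SS.filter fun A => x ∈ A).card = 3)
    (I : SMTI (RSt SS) Unit X) (hI : RX3CHyps SS I)
    (f : RSt SS → Option Unit)
    (hfSet : ∀ A : {A : Finset X // A ∈ SS}, f (Sum.inl A) = some ())
    (hfD : f (Sum.inr ()) = none) :
    (∃ (u : RSt SS) (w : Unit), I.BlockingPair f u w) ↔
      ∃ Cov ⊆ SS, ∀ x : X, (Cov.filter fun A => x ∈ A).card = 1 := by
  simp only [RX3CHyps.exists_blockingPair_iff hfSet hfD,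
    hI.blocksWith_iff_exactCover hocc hfSet hfD]
  constructor
  · rintro ⟨V, -, hcover⟩
    exact ⟨_, fun A hA => by simpa using map_subtype_subset V hA, hcover⟩
  · rintro ⟨Cov, hCov, hcover⟩
    obtain ⟨x⟩ : Nonempty X := Fintype.card_pos_iff.1 (by omega)
    have hmap := subtype_map_of_mem (p := (· ∈ SS)) hCov
    refine ⟨Cov.subtype (· ∈ SS), ?_, by rwa [hmap]⟩
    rw [← map_nonempty (f := Function.Embedding.subtype _), hmap]
    exact (card_pos.1 (by rw [hcover x]; omega)).mono (filter_subset _ _)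

/-- Given an RX3C instance (`|X| = 3q`, every `A ∈ SS` has three
elements, every element of `X` lies in exactly three members of `SS`), the feasible
matching assigning all set-students to the single college and leaving `d` unmatched
admits a blocking pair iff `SS` contains an exact cover of `X`. -/
theorem stmt2 {X : Type} [Fintype X] (q : ℕ) (hq : 1 ≤ q)
    (hX : Fintype.card X = 3 * q)
    (SS : Finset (Finset X))
    (h3 : ∀ A ∈ SS, A.card = 3)
    (hocc : ∀ x : X, (SS.filter fun A => x ∈ A).card = 3)
    (I : SMTI (RSt SS) Unit X) (hI : RX3CHyps SS I)
    (f : RSt SS → Option Unit)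
    (hfSet : ∀ A : {A : Finset X // A ∈ SS}, f (Sum.inl A) = some ())
    (hfD : f (Sum.inr ()) = none) :
    (∃ (u : RSt SS) (w : Unit), I.BlockingPair f u w) ↔
      ∃ Cov ⊆ SS, ∀ x : X, (Cov.filter fun A => x ∈ A).card = 1 :=
  stmt2_general q hq hX SS hocc I hI f hfSet hfD
end
end

section
/- Let φ be a Boolean formula in 3CNF over two disjoint variable sets X* and Y* with clauses C*_1,…,C*_s, where clause C*_j has literals lit_j^1, lit_j^2, lit_j^3. For each j introduce four fresh variables a_j, b_j, c_j, d_j and the clauses C_j^1 = (¬lit_j^1, a_j, b_j), C_j^2 = (lit_j^2, b_j, c_j), C_j^3 = (¬lit_j^3, c_j, d_j), where ¬lit denotes the complementary literal. Then the following are equivalent: (i) for every truth assignment of X* there exists a truth assignment of Y* under which every clause C*_j is satisfied; (ii) for every truth assignment of X* there exists a truth assignment of Y* ∪ {a_j, b_j, c_j, d_j : j ∈ [s]} under which every clause C_j^z (j ∈ [s], z ∈ [3]) is 1-in-3-satisfied. -/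
/-- A literal over the variable set `V`: a polarity (`true` = positive) together
with a variable. -/
abbrev Lit (V : Type) := Bool × V

/-- The truth value of a literal under an assignment. -/
def evalLit {V : Type} (σ : V → Bool) (l : Lit V) : Bool :=
  if l.1 then σ l.2 else !(σ l.2)

/-- A triple of Boolean values is 1-in-3-satisfied if exactly one entry is true. -/
def OneInThree (x y z : Bool) : Prop := x.toNat + y.toNat + z.toNat = 1

/-- If all three literals are false, the first clause forces `t 1` false, the second then
forces `t 2` true, and the third has two true entries. Otherwise
`t = ![x && y, x && !y, !(x || y), z && (x || y)]` works. -/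
theorem or_or_eq_true_iff_exists_oneInThree (x y z : Bool) :
    (x || y || z) = true ↔ ∃ t : Fin 4 → Bool,
      OneInThree (!x) (t 0) (t 1) ∧ OneInThree y (t 1) (t 2) ∧ OneInThree (!z) (t 2) (t 3) := by
  unfold OneInThree
  revert x y z
  decide

theorem exists_fin_three_eq_true_iff (f : Fin 3 → Bool) :
    (∃ z, f z = true) ↔ (f 0 || f 1 || f 2) = true := by
  simp [Fin.exists_fin_succ, or_assoc]

theorem exists_uncurry_forall_iff {α β γ : Type*} (P : α → (β → γ) → Prop) :
    (∃ f : α × β → γ, ∀ a, P a fun b => f (a, b)) ↔ ∀ a, ∃ g, P a g := by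
  rw [Classical.skolem]
  exact ⟨fun ⟨f, hf⟩ => ⟨Function.curry f, hf⟩, fun ⟨g, hg⟩ => ⟨Function.uncurry g, hg⟩⟩

/-- Let `φ` be a 3CNF formula over disjoint variable sets `X`
and `Y` with clauses `cl j = (lit_j^1, lit_j^2, lit_j^3)` (`j ∈ Fin s`).  For each
`j` introduce four fresh variables `a_j = (j,0), b_j = (j,1), c_j = (j,2),
d_j = (j,3)` and the clauses `(¬lit_j^1, a_j, b_j)`, `(lit_j^2, b_j, c_j)`,
`(¬lit_j^3, c_j, d_j)`.  Then: for every assignment of `X` there is an assignment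
of `Y` satisfying all clauses of `φ` iff for every assignment of `X` there is an
assignment of `Y` and the fresh variables 1-in-3-satisfying all new clauses. -/
theorem stmt5 (X Y : Type) (s : ℕ) (cl : Fin s → Fin 3 → Lit (X ⊕ Y)) :
    (∀ σX : X → Bool, ∃ σY : Y → Bool, ∀ j : Fin s,
        ∃ z : Fin 3, evalLit (Sum.elim σX σY) (cl j z) = true) ↔
    (∀ σX : X → Bool, ∃ (σY : Y → Bool) (σZ : Fin s × Fin 4 → Bool), ∀ j : Fin s,
        OneInThree (!(evalLit (Sum.elim σX σY) (cl j 0))) (σZ (j, 0)) (σZ (j, 1)) ∧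
        OneInThree (evalLit (Sum.elim σX σY) (cl j 1)) (σZ (j, 1)) (σZ (j, 2)) ∧
        OneInThree (!(evalLit (Sum.elim σX σY) (cl j 2))) (σZ (j, 2)) (σZ (j, 3))) := by
  refine forall_congr' fun σX => exists_congr fun σY => ?_
  exact (forall_congr' fun j => (exists_fin_three_eq_true_iff _).trans
    (or_or_eq_true_iff_exists_oneInThree _ _ _)).trans (exists_uncurry_forall_iff _).symm
end

section
/- Let M be a feasible matching in an SMTI-Diverse instance, and let {u,w} ∉ M with u ∈ A(w) and u strictly preferring w to M(u). Then {u,w} is a blocking pair of M if and only if there exists a subset U' ⊆ M(w) such that: (i) no two students of U' have the same type vector; (ii) every u' ∈ U' belongs to worst(M, w, τ_{u'}); (iii) w strictly prefers u to every student of U'; and (iv) |M(w)∖U'| + 1 ≤ q_w and ℓ_w ≤ τ_u + Σ_{u''∈M(w)∖U'} τ_{u''} ≤ u_w componentwise. -/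
/-!
A blocking witness `U'` can be normalised in two steps. If two students of `U'` have the same
type, one of them may stay at `w`: the new remainder `M(w) ∖ U'` is still no larger than `M(w)`
minus one slot, and in every type it loads at most what the feasible `M(w)` already carries,
so a witness of minimal size has pairwise distinct types. Then every student of such a witness
can be swapped for a least preferred student of `M(w)` of the same type: the remainder has the
same size and type counts, and `w` likes the new witnesses no more than the old ones.
-/

open scoped Classical

noncomputable section

namespace SMTI

variable {S C T : Type} [Fintype S] [Fintype C] [Fintype T]

/-- `S(M,w,τ)`: the students assigned to `w` whose type vector equals `tv`. -/
def sset (I : SMTI S C T) (f : S → Option C) (w : C) (tv : T → Bool) : Finset S :=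
  (I.assigned f w).filter fun u => ∀ z, I.tau u z = tv z

/-- `worst(M,w,τ)`: the least preferred (by `w`) students in `S(M,w,τ)`. -/
def worst (I : SMTI S C T) (f : S → Option C) (w : C) (tv : T → Bool) : Finset S :=
  (I.sset f w tv).filter fun u => ∀ u' ∈ I.sset f w tv, I.rankC w u' ≤ I.rankC w u

end SMTI

theorem Finset.sum_sdiff_image_of_comp_eq {α M : Type*} [DecidableEq α] [AddCancelCommMonoid M]
    {s t : Finset α} {g : α → α} {φ : α → M} (ht : t ⊆ s) (hgs : t.image g ⊆ s)
    (hg : Set.InjOn g t) (hφ : ∀ a ∈ t, φ (g a) = φ a) :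
    ∑ x ∈ s \ t.image g, φ x = ∑ x ∈ s \ t, φ x := by
  have himage : ∑ x ∈ t.image g, φ x = ∑ x ∈ t, φ x := by
    rw [Finset.sum_image hg]
    exact Finset.sum_congr rfl hφ
  apply add_right_cancel (b := ∑ x ∈ t, φ x)
  rw [Finset.sum_sdiff ht, ← himage, Finset.sum_sdiff hgs]

namespace SMTI

variable {S C T : Type} [Fintype S] [Fintype C] [Fintype T]
  {I : SMTI S C T} {f : S → Option C} {u a b : S} {w : C} {tv : T → Bool} {U : Finset S}

theorem mem_sset_self (ha : a ∈ I.assigned f w) : a ∈ I.sset f w (I.tau a) := by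
  simp [sset, ha]

theorem tau_eq_of_mem_worst (hb : b ∈ I.worst f w tv) : I.tau b = tv := by
  simp only [worst, sset, Finset.mem_filter] at hb
  exact funext hb.1.2

theorem mem_assigned_of_mem_worst (hb : b ∈ I.worst f w tv) : b ∈ I.assigned f w := by
  simp only [worst, sset, Finset.mem_filter] at hb
  exact hb.1.1

theorem rankC_le_of_mem_worst (hb : b ∈ I.worst f w tv) (ha : a ∈ I.sset f w tv) :
    I.rankC w a ≤ I.rankC w b := by
  simp only [worst, Finset.mem_filter] at hb
  exact hb.2 a ha

theorem exists_mem_worst (ha : a ∈ I.assigned f w) : ∃ b, b ∈ I.worst f w (I.tau a) := by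
  obtain ⟨b, hb, hmax⟩ := Finset.exists_max_image _ (I.rankC w) ⟨a, mem_sset_self ha⟩
  exact ⟨b, Finset.mem_filter.2 ⟨hb, hmax⟩⟩

theorem BlocksWith.erase_of_tau_eq (hfeas : I.Feasible f)
    (hB : I.BlocksWith f u w U) {u₁ u₂ : S} (h₁ : u₁ ∈ U) (h₂ : u₂ ∈ U) (hne : u₁ ≠ u₂)
    (htau : I.tau u₁ = I.tau u₂) :
    I.BlocksWith f u w (U.erase u₂) := by
  obtain ⟨hnm, hacc, hpref, hsub, hrank, hcard, hquota⟩ := hB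
  have hrest : I.assigned f w \ U.erase u₂ = insert u₂ (I.assigned f w \ U) :=
    Finset.sdiff_erase (hsub h₂)
  have hnotin : u₂ ∉ I.assigned f w \ U := fun h => (Finset.mem_sdiff.1 h).2 h₂
  have hpair : {u₁, u₂} ⊆ U := Finset.insert_subset h₁ (Finset.singleton_subset_iff.2 h₂)
  refine ⟨hnm, hacc, hpref, (Finset.erase_subset _ _).trans hsub,
    fun x hx => hrank x (Finset.mem_of_mem_erase hx), ?_, fun z => ?_⟩
  · have hU : 2 ≤ U.card := (Finset.card_pair hne).symm.le.trans (Finset.card_le_card hpair)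
    have := Finset.card_sdiff_add_card_eq_card hsub
    have := (hfeas w).1
    rw [hrest, Finset.card_insert_of_notMem hnotin]
    omega
  · have hload : ∑ x ∈ I.assigned f w \ U, (I.tau x z).toNat + (I.tau u₁ z).toNat
        + (I.tau u₂ z).toNat ≤ I.typeLoad f w z := by
      rw [add_assoc, ← Finset.sum_pair hne (f := fun x => (I.tau x z).toNat), typeLoad,
        ← Finset.sum_sdiff hsub]
      exact Nat.add_le_add_left (Finset.sum_le_sum_of_subset hpair) _
    have := ((hfeas w).2 z).2
    obtain ⟨hlower, hupper⟩ := hquota z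
    have := Bool.toNat_le (I.tau u z)
    have := Bool.toNat_le (I.tau u₂ z)
    rw [htau] at hload
    rw [hrest, Finset.sum_insert hnotin]
    constructor <;> omega

theorem BlocksWith.exists_injOn_tau (hfeas : I.Feasible f)
    (hB : I.BlocksWith f u w U) : ∃ V, I.BlocksWith f u w V ∧ Set.InjOn I.tau V := by
  induction U using Finset.strongInduction with
  | H U ih =>
    by_cases hinj : Set.InjOn I.tau U
    · exact ⟨U, hB, hinj⟩
    · obtain ⟨u₁, h₁, u₂, h₂, htau, hne⟩ : ∃ u₁ ∈ U, ∃ u₂ ∈ U, I.tau u₁ = I.tau u₂ ∧ u₁ ≠ u₂ := by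
        simpa [Set.InjOn] using hinj
      exact ih _ (Finset.erase_ssubset h₂) (hB.erase_of_tau_eq hfeas h₁ h₂ hne htau)

theorem BlocksWith.image (hB : I.BlocksWith f u w U) {g : S → S} (hg : Set.InjOn g U)
    (hg_mem : ∀ a ∈ U, g a ∈ I.assigned f w) (hg_tau : ∀ a ∈ U, I.tau (g a) = I.tau a)
    (hg_rank : ∀ a ∈ U, I.rankC w a ≤ I.rankC w (g a)) :
    I.BlocksWith f u w (U.image g) := by
  obtain ⟨hnm, hacc, hpref, hsub, hrank, hcard, hquota⟩ := hB
  have hgsub : U.image g ⊆ I.assigned f w := by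
    simpa [Finset.image_subset_iff] using hg_mem
  have hrest_card : (I.assigned f w \ U.image g).card = (I.assigned f w \ U).card := by
    rw [Finset.card_sdiff_of_subset hgsub, Finset.card_sdiff_of_subset hsub,
      Finset.card_image_of_injOn hg]
  have hrest_sum : ∀ z, ∑ x ∈ I.assigned f w \ U.image g, (I.tau x z).toNat
      = ∑ x ∈ I.assigned f w \ U, (I.tau x z).toNat := fun z =>
    Finset.sum_sdiff_image_of_comp_eq hsub hgsub hg fun a ha => by rw [hg_tau a ha]
  refine ⟨hnm, hacc, hpref, hgsub, ?_, hrest_card ▸ hcard, fun z => hrest_sum z ▸ hquota z⟩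
  simp only [Finset.mem_image, forall_exists_index, and_imp, forall_apply_eq_imp_iff₂]
  exact fun a ha => (hrank a ha).trans_le (hg_rank a ha)

theorem BlocksWith.exists_worst_of_injOn_tau (hB : I.BlocksWith f u w U)
    (hinj : Set.InjOn I.tau U) :
    ∃ V, I.BlocksWith f u w V ∧ Set.InjOn I.tau V ∧ ∀ a ∈ V, a ∈ I.worst f w (I.tau a) := by
  have hsub : U ⊆ I.assigned f w := hB.2.2.2.1
  choose! g hg using fun a (ha : a ∈ U) => exists_mem_worst (hsub ha)
  have hg_tau : ∀ a ∈ U, I.tau (g a) = I.tau a := fun a ha => tau_eq_of_mem_worst (hg a ha)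
  have hinj_comp : Set.InjOn (I.tau ∘ g) U := hinj.congr fun a ha => (hg_tau a ha).symm
  refine ⟨U.image g, hB.image hinj_comp.of_comp (fun a ha => mem_assigned_of_mem_worst (hg a ha))
    hg_tau (fun a ha => rankC_le_of_mem_worst (hg a ha) (mem_sset_self (hsub ha))), ?_, ?_⟩
  · simpa using hinj_comp.image_of_comp
  · simp only [Finset.mem_image, forall_exists_index, and_imp, forall_apply_eq_imp_iff₂]
    exact fun a ha => (hg_tau a ha).symm ▸ hg a ha

end SMTI

theorem stmt13_general {S C T : Type} [Fintype S] [Fintype C] [Fintype T]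
    (I : SMTI S C T) (f : S → Option C) (hfeas : I.Feasible f)
    (u : S) (w : C) (h1 : f u ≠ some w) (h2 : I.acc u w) (h3 : I.PrefersTo f u w) :
    I.BlockingPair f u w ↔
      ∃ U' : Finset S, U' ⊆ I.assigned f w ∧
        (∀ u1 ∈ U', ∀ u2 ∈ U', (∀ z, I.tau u1 z = I.tau u2 z) → u1 = u2) ∧
        (∀ u' ∈ U', u' ∈ I.worst f w (fun z => I.tau u' z)) ∧
        (∀ u' ∈ U', I.rankC w u < I.rankC w u') ∧
        (I.assigned f w \ U').card + 1 ≤ I.cap w ∧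
        (∀ z, I.lq w z ≤ (I.tau u z).toNat + ∑ u'' ∈ I.assigned f w \ U', (I.tau u'' z).toNat ∧
          (I.tau u z).toNat + ∑ u'' ∈ I.assigned f w \ U', (I.tau u'' z).toNat ≤ I.uq w z) := by
  constructor
  · rintro ⟨U, hB⟩
    obtain ⟨V, hBV, hinj⟩ := hB.exists_injOn_tau hfeas
    obtain ⟨W, ⟨-, -, -, hsub, hrank, hcard, hquota⟩, hinjW, hworst⟩ :=
      hBV.exists_worst_of_injOn_tau hinj
    exact ⟨W, hsub, fun a ha b hb h => hinjW ha hb (funext h), hworst, hrank, hcard, hquota⟩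
  · rintro ⟨U', hsub, -, -, hrank, hcard, hquota⟩
    exact ⟨U', h1, h2, h3, hsub, hrank, hcard, hquota⟩

/-- A pair `{u,w}` (unmatched, acceptable, with `u` strictly
preferring `w` to `M(u)`) blocks a feasible matching iff it has a witness consisting
of pairwise type-distinct students, each being among the least preferred students of
its type vector in `M(w)`, all strictly less preferred than `u` by `w`, such that the
exchange is feasible for `w`. -/
theorem stmt13 {S C T : Type} [Fintype S] [Fintype C] [Fintype T]
    (I : SMTI S C T) (f : S → Option C) (hM : I.IsMatching f) (hfeas : I.Feasible f)
    (u : S) (w : C) (h1 : f u ≠ some w) (h2 : I.acc u w) (h3 : I.PrefersTo f u w) :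
    I.BlockingPair f u w ↔
      ∃ U' : Finset S, U' ⊆ I.assigned f w ∧
        (∀ u1 ∈ U', ∀ u2 ∈ U', (∀ z, I.tau u1 z = I.tau u2 z) → u1 = u2) ∧
        (∀ u' ∈ U', u' ∈ I.worst f w (fun z => I.tau u' z)) ∧
        (∀ u' ∈ U', I.rankC w u < I.rankC w u') ∧
        (I.assigned f w \ U').card + 1 ≤ I.cap w ∧
        (∀ z, I.lq w z ≤ (I.tau u z).toNat + ∑ u'' ∈ I.assigned f w \ U', (I.tau u'' z).toNat ∧
          (I.tau u z).toNat + ∑ u'' ∈ I.assigned f w \ U', (I.tau u'' z).toNat ≤ I.uq w z) :=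
  stmt13_general I f hfeas u w h1 h2 h3
end
end

section
/- Let I be an SMTI-Diverse instance, for each z ∈ T let U_z = {u ∈ U : τ_u[z] = 1}, let F = {U_z : z ∈ T}, and let f : {1,…,|F|} → F be a bijection. Let I* be the instance with type set T* = {1,…,|F|}, type vectors τ*_u given by τ*_u[z*] = 1 iff u ∈ f(z*), quota vectors ℓ*_w[z*] = max{ℓ_w[z] : z ∈ T, U_z = f(z*)} and u*_w[z*] = min{u_w[z] : z ∈ T, U_z = f(z*)}, and with the same students, colleges, preference lists, acceptable sets and capacities as I. Then every matching M is feasible and stable for I if and only if M is feasible and stable for I*. -/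
open scoped Classical

noncomputable section

namespace SMTI

variable {S C T : Type} [Fintype S] [Fintype C] [Fintype T]

/-- `U_z`: the set of students having type `z`. -/
def Uz (I : SMTI S C T) (z : T) : Finset S :=
  Finset.univ.filter fun u => I.tau u z = true

end SMTI

/-!
Types with the same student set `U_z` are indistinguishable to every matching: their loads at
a college coincide, both in a matching and in the tentative assignment of a blocking pair.
Hence the quota constraints of all types in one class amount to a single constraint whose lower
quota is their maximum and whose upper quota is their minimum, which is exactly the quota of the
merged type; everything else in feasibility and stability is left untouched by the merge.
-/

namespace SMTI

variable {S C T T' : Type} [Fintype S] [Fintype C] [Fintype T] [Fintype T']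

theorem mem_Uz {I : SMTI S C T} {u : S} {z : T} : u ∈ I.Uz z ↔ I.tau u z = true := by
  simp [Uz]

theorem Uz_eq_of_tau_eq_decide {I : SMTI S C T} {z : T} {s : Finset S}
    (h : ∀ u, I.tau u z = decide (u ∈ s)) : I.Uz z = s := by
  ext u
  simp [mem_Uz, h]

theorem tau_eq_of_Uz_eq {I : SMTI S C T} {I' : SMTI S C T'} {z : T} {z' : T'}
    (h : I.Uz z = I'.Uz z') : (I.tau · z) = (I'.tau · z') := by
  funext u
  have hu := congrArg (u ∈ ·) h
  simp only [mem_Uz, eq_iff_iff] at hu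
  exact Bool.eq_iff_iff.mpr hu

/-- The lower quota of a merged type is the maximum, and its upper quota the minimum, of the
quotas of the types merged into it. -/
structure IsTypeMerge (I : SMTI S C T) (I' : SMTI S C T') : Prop where
  acc_eq : I'.acc = I.acc
  rankS_eq : I'.rankS = I.rankS
  rankC_eq : I'.rankC = I.rankC
  cap_eq : I'.cap = I.cap
  exists_Uz_eq : ∀ z, ∃ z', I.Uz z = I'.Uz z'
  exists_lq_eq : ∀ w z', ∃ z, I.Uz z = I'.Uz z' ∧ I'.lq w z' = I.lq w z
  lq_le : ∀ w z z', I.Uz z = I'.Uz z' → I.lq w z ≤ I'.lq w z'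
  exists_uq_eq : ∀ w z', ∃ z, I.Uz z = I'.Uz z' ∧ I'.uq w z' = I.uq w z
  uq_le : ∀ w z z', I.Uz z = I'.Uz z' → I'.uq w z' ≤ I.uq w z

namespace IsTypeMerge

variable {I : SMTI S C T} {I' : SMTI S C T'}

theorem quotas_iff (h : IsTypeMerge I I') (w : C) (load : (S → Bool) → ℕ) :
    (∀ z, I.lq w z ≤ load (I.tau · z) ∧ load (I.tau · z) ≤ I.uq w z) ↔
      ∀ z', I'.lq w z' ≤ load (I'.tau · z') ∧ load (I'.tau · z') ≤ I'.uq w z' := by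
  constructor
  · intro hq z'
    obtain ⟨zl, hzl, hlq⟩ := h.exists_lq_eq w z'
    obtain ⟨zu, hzu, huq⟩ := h.exists_uq_eq w z'
    constructor
    · rw [hlq, ← tau_eq_of_Uz_eq hzl]
      exact (hq zl).1
    · rw [huq, ← tau_eq_of_Uz_eq hzu]
      exact (hq zu).2
  · intro hq z
    obtain ⟨z', hz⟩ := h.exists_Uz_eq z
    rw [tau_eq_of_Uz_eq hz]
    exact ⟨(h.lq_le w z z' hz).trans (hq z').1, (hq z').2.trans (h.uq_le w z z' hz)⟩

theorem isMatching_iff (h : IsTypeMerge I I') (f : S → Option C) :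
    I.IsMatching f ↔ I'.IsMatching f := by
  simp only [IsMatching, h.acc_eq]

theorem feasible_iff (h : IsTypeMerge I I') (f : S → Option C) :
    I.Feasible f ↔ I'.Feasible f := by
  refine forall_congr' fun w => and_congr (by rw [h.cap_eq]; rfl) ?_
  exact h.quotas_iff w fun t => ∑ u ∈ I.assigned f w, (t u).toNat

theorem blocksWith_iff (h : IsTypeMerge I I') (f : S → Option C) (u : S) (w : C)
    (U' : Finset S) : I.BlocksWith f u w U' ↔ I'.BlocksWith f u w U' := by
  unfold BlocksWith PrefersTo
  rw [h.acc_eq, h.rankS_eq, h.rankC_eq, h.cap_eq]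
  exact Iff.rfl.and <| Iff.rfl.and <| Iff.rfl.and <| Iff.rfl.and <| Iff.rfl.and <| Iff.rfl.and <|
    h.quotas_iff w fun t => (t u).toNat + ∑ u' ∈ I.assigned f w \ U', (t u').toNat

theorem stable_iff (h : IsTypeMerge I I') (f : S → Option C) : I.Stable f ↔ I'.Stable f :=
  forall₂_congr fun u w => not_congr <| exists_congr fun U' => h.blocksWith_iff f u w U'

end IsTypeMerge

end SMTI

theorem stmt15_general {S C T : Type} [Fintype S] [Fintype C] [Fintype T]
    (I : SMTI S C T) (k : ℕ) (fb : Fin k → Finset S)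
    (hsurj : ∀ z : T, ∃ z' : Fin k, fb z' = I.Uz z)
    (I' : SMTI S C (Fin k))
    (hacc : I'.acc = I.acc) (hrS : I'.rankS = I.rankS) (hrC : I'.rankC = I.rankC)
    (hcap : I'.cap = I.cap)
    (htau : ∀ (u : S) (z' : Fin k), I'.tau u z' = decide (u ∈ fb z'))
    (hlq : ∀ (w : C) (z' : Fin k),
      (∃ z : T, I.Uz z = fb z' ∧ I'.lq w z' = I.lq w z) ∧
      (∀ z : T, I.Uz z = fb z' → I.lq w z ≤ I'.lq w z'))
    (huq : ∀ (w : C) (z' : Fin k),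
      (∃ z : T, I.Uz z = fb z' ∧ I'.uq w z' = I.uq w z) ∧
      (∀ z : T, I.Uz z = fb z' → I'.uq w z' ≤ I.uq w z))
    (f : S → Option C) :
    (I.IsMatching f ∧ I.Feasible f ∧ I.Stable f) ↔
      (I'.IsMatching f ∧ I'.Feasible f ∧ I'.Stable f) := by
  have hUz : ∀ z', I'.Uz z' = fb z' := fun z' => SMTI.Uz_eq_of_tau_eq_decide (htau · z')
  have hmerge : I.IsTypeMerge I' :=
    { acc_eq := hacc
      rankS_eq := hrS
      rankC_eq := hrC
      cap_eq := hcap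
      exists_Uz_eq := fun z => (hsurj z).imp fun z' hz' => by rw [hUz, hz']
      exists_lq_eq := fun w z' => by simpa only [hUz] using (hlq w z').1
      lq_le := fun w z z' => by simpa only [hUz] using (hlq w z').2 z
      exists_uq_eq := fun w z' => by simpa only [hUz] using (huq w z').1
      uq_le := fun w z z' => by simpa only [hUz] using (huq w z').2 z }
  rw [hmerge.isMatching_iff, hmerge.feasible_iff, hmerge.stable_iff]

/-- Merging duplicate types: let `F = {U_z : z ∈ T}` and let
`fb : Fin k → Finset S` enumerate `F` bijectively.  Let `I'` be the instance on the
type set `Fin k` with `τ'_u[z'] = 1` iff `u ∈ fb z'`, lower quotas the maxima and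
upper quotas the minima of the merged quotas, and everything else unchanged.
Then a matching is feasible and stable for `I` iff it is feasible and stable for `I'`. -/
theorem stmt15 {S C T : Type} [Fintype S] [Fintype C] [Fintype T]
    (I : SMTI S C T) (k : ℕ) (fb : Fin k → Finset S)
    (hmem : ∀ z' : Fin k, ∃ z : T, fb z' = I.Uz z)
    (hinj : Function.Injective fb)
    (hsurj : ∀ z : T, ∃ z' : Fin k, fb z' = I.Uz z)
    (I' : SMTI S C (Fin k))
    (hacc : I'.acc = I.acc) (hrS : I'.rankS = I.rankS) (hrC : I'.rankC = I.rankC)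
    (hcap : I'.cap = I.cap)
    (htau : ∀ (u : S) (z' : Fin k), I'.tau u z' = decide (u ∈ fb z'))
    (hlq : ∀ (w : C) (z' : Fin k),
      (∃ z : T, I.Uz z = fb z' ∧ I'.lq w z' = I.lq w z) ∧
      (∀ z : T, I.Uz z = fb z' → I.lq w z ≤ I'.lq w z'))
    (huq : ∀ (w : C) (z' : Fin k),
      (∃ z : T, I.Uz z = fb z' ∧ I'.uq w z' = I.uq w z) ∧
      (∀ z : T, I.Uz z = fb z' → I'.uq w z' ≤ I.uq w z))
    (f : S → Option C) :
    (I.IsMatching f ∧ I.Feasible f ∧ I.Stable f) ↔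
      (I'.IsMatching f ∧ I'.Feasible f ∧ I'.Stable f) :=
  stmt15_general I k fb hsurj I' hacc hrS hrC hcap htau hlq huq f
end
end

section
/- Let I be an SMTI-Diverse instance with t ≥ 1 types, let M be a feasible matching, and suppose {u,w} is a blocking pair of M (with some witness). Then there is a witness U'' ⊆ M(w) for the blocking pair {u,w} with |U''| ≤ min{t, q_w}. -/
open scoped Classical

noncomputable section

/-!
Shrinking a witness `U' ⊆ M(w)` only helps the lower quotas. An upper quota `u_w(z)` can only
fail at a type `z` where `u` together with all of `M(w)` is too many; since `M(w)` alone
respects `u_w(z)` and `τ_u(z) ≤ 1`, removing one student of type `z` (which `U'` must contain)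
repairs it. The capacity needs a removed student only when `M(w)` is full. Hence one student
of `U'` per such type, or a single student of `U'`, or nothing, is already a witness.
-/

namespace SMTI

variable {S C T : Type} [Fintype S] [Fintype C] [Fintype T]
  {I : SMTI S C T} {f : S → Option C} {u : S} {w : C} {U' U'' : Finset S}

def Overfull (I : SMTI S C T) (f : S → Option C) (u : S) (w : C) (z : T) : Prop :=
  I.uq w z < (I.tau u z).toNat + I.typeLoad f w z

theorem sum_sdiff_add_sum_eq_typeLoad (hV : U' ⊆ I.assigned f w) (z : T) :
    ∑ v ∈ I.assigned f w \ U', (I.tau v z).toNat + ∑ v ∈ U', (I.tau v z).toNat =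
      I.typeLoad f w z :=
  Finset.sum_sdiff hV

theorem BlocksWith.exists_mem_tau_of_overfull (h : I.BlocksWith f u w U') {z : T}
    (hz : I.Overfull f u w z) : ∃ v ∈ U', I.tau v z = true := by
  obtain ⟨-, -, -, hsub, -, -, hquota⟩ := h
  by_contra! hnone
  have hzero : ∑ v ∈ U', (I.tau v z).toNat = 0 :=
    Finset.sum_eq_zero fun v hv => by simp [hnone v hv]
  have hsplit := sum_sdiff_add_sum_eq_typeLoad hsub z
  have hupper := (hquota z).2
  unfold Overfull at hz
  omega

theorem BlocksWith.card_le_cap (hfeas : I.Feasible f) (h : I.BlocksWith f u w U') :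
    U'.card ≤ I.cap w :=
  (Finset.card_le_card h.2.2.2.1).trans (hfeas w).1

theorem BlocksWith.nonempty_of_cap_le (h : I.BlocksWith f u w U')
    (hfull : I.cap w ≤ (I.assigned f w).card) : U'.Nonempty := by
  rw [Finset.nonempty_iff_ne_empty]
  rintro rfl
  have hcap := h.2.2.2.2.2.1
  rw [Finset.sdiff_empty] at hcap
  omega

theorem BlocksWith.of_subset (hfeas : I.Feasible f) (h : I.BlocksWith f u w U')
    (hsub : U'' ⊆ U')
    (hroom : (I.assigned f w).card + 1 ≤ I.cap w ∨ U''.Nonempty)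
    (hcover : ∀ z, I.Overfull f u w z → ∃ v ∈ U'', I.tau v z = true) :
    I.BlocksWith f u w U'' := by
  obtain ⟨hne, hacc, hpref, hU'A, hrank, -, hquota⟩ := h
  have hU''A : U'' ⊆ I.assigned f w := hsub.trans hU'A
  refine ⟨hne, hacc, hpref, hU''A, fun v hv => hrank v (hsub hv), ?_, fun z => ⟨?_, ?_⟩⟩
  · rcases hroom with hroom | hnonempty
    · exact (Nat.add_le_add_right (Finset.card_le_card Finset.sdiff_subset) 1).trans hroom
    · have hcard := Finset.card_sdiff_of_subset hU''A
      have hpos := hnonempty.card_pos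
      have hle := Finset.card_le_card hU''A
      have hcapA := (hfeas w).1
      omega
  · have hsplitU' := sum_sdiff_add_sum_eq_typeLoad hU'A z
    have hsplitU'' := sum_sdiff_add_sum_eq_typeLoad hU''A z
    have hmono : ∑ v ∈ U'', (I.tau v z).toNat ≤ ∑ v ∈ U', (I.tau v z).toNat :=
      Finset.sum_le_sum_of_subset hsub
    have hlower := (hquota z).1
    omega
  · have hsplit := sum_sdiff_add_sum_eq_typeLoad hU''A z
    by_cases hz : I.Overfull f u w z
    · obtain ⟨v, hv, hvz⟩ := hcover z hz
      have hone : 1 ≤ ∑ v ∈ U'', (I.tau v z).toNat :=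
        (by simp [hvz] : 1 ≤ (I.tau v z).toNat).trans
          (Finset.single_le_sum (f := fun v => (I.tau v z).toNat) (fun _ _ => Nat.zero_le _) hv)
      have hupper := ((hfeas w).2 z).2
      have htau := Bool.toNat_le (I.tau u z)
      omega
    · unfold Overfull at hz
      omega

theorem BlocksWith.exists_card_le_card_types (ht : 1 ≤ Fintype.card T)
    (hfeas : I.Feasible f) (h : I.BlocksWith f u w U') :
    ∃ U'', I.BlocksWith f u w U'' ∧ U''.card ≤ Fintype.card T := by
  by_cases hover : ∃ z, I.Overfull f u w z
  · have : Nonempty S := ⟨u⟩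
    choose! g hgU hgτ using fun z (hz : I.Overfull f u w z) => h.exists_mem_tau_of_overfull hz
    obtain ⟨z₀, hz₀⟩ := hover
    have hmem : ∀ z, I.Overfull f u w z → g z ∈ (Finset.univ.filter (I.Overfull f u w)).image g :=
      fun z hz => Finset.mem_image_of_mem g (Finset.mem_filter.mpr ⟨Finset.mem_univ z, hz⟩)
    refine ⟨_, h.of_subset hfeas ?_ (Or.inr ⟨g z₀, hmem z₀ hz₀⟩)
      fun z hz => ⟨g z, hmem z hz, hgτ z hz⟩, Finset.card_image_le.trans (Finset.card_le_univ _)⟩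
    simp only [Finset.image_subset_iff, Finset.mem_filter, Finset.mem_univ, true_and]
    exact hgU
  have hcover : ∀ U'' : Finset S, ∀ z, I.Overfull f u w z → ∃ v ∈ U'', I.tau v z = true :=
    fun _ z hz => absurd ⟨z, hz⟩ hover
  by_cases hroom : (I.assigned f w).card + 1 ≤ I.cap w
  · exact ⟨∅, h.of_subset hfeas (Finset.empty_subset _) (Or.inl hroom) (hcover ∅), by simp⟩
  · obtain ⟨v, hv⟩ := h.nonempty_of_cap_le (by omega)
    exact ⟨{v}, h.of_subset hfeas (by simpa using hv) (Or.inr ⟨v, by simp⟩) (hcover {v}),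
      by simpa using ht⟩

end SMTI

theorem stmt18_general {S C T : Type} [Fintype S] [Fintype C] [Fintype T]
    (ht : 1 ≤ Fintype.card T)
    (I : SMTI S C T) (f : S → Option C) (hfeas : I.Feasible f)
    (u : S) (w : C) (hbp : I.BlockingPair f u w) :
    ∃ U'' : Finset S, I.BlocksWith f u w U'' ∧
      U''.card ≤ min (Fintype.card T) (I.cap w) := by
  obtain ⟨U', hU'⟩ := hbp
  obtain ⟨U'', hU'', hcard⟩ := hU'.exists_card_le_card_types ht hfeas
  exact ⟨U'', hU'', le_min hcard (hU''.card_le_cap hfeas)⟩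

/-- Every blocking pair of a feasible matching has a witness of
size at most `min t q_w`. -/
theorem stmt18 {S C T : Type} [Fintype S] [Fintype C] [Fintype T]
    (ht : 1 ≤ Fintype.card T)
    (I : SMTI S C T) (f : S → Option C) (hM : I.IsMatching f) (hfeas : I.Feasible f)
    (u : S) (w : C) (hbp : I.BlockingPair f u w) :
    ∃ U'' : Finset S, I.BlocksWith f u w U'' ∧
      U''.card ≤ min (Fintype.card T) (I.cap w) :=
  stmt18_general ht I f hfeas u w hbp
end
end

section
/- In the Set Cover construction the following are equivalent: (i) there exists a set cover C ⊆ {S_1,…,S_{m*}} with |C| ≤ k; (ii) the constructed instance admits a feasible matching; (iii) the constructed instance admits a feasible and stable matching. -/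
open scoped Classical

noncomputable section

section SetCover

/-- Students of the Set Cover construction: set-students `Sum.inl i` and dummy
students `Sum.inr i` for `i ∈ Fin mm`. -/
abbrev SCSt (mm : ℕ) := Fin mm ⊕ Fin mm

/-- Types of the Set Cover construction: one type per universe element, one type
per set, and one extra type for the dummy students. -/
abbrev SCTy (nn mm : ℕ) := Fin nn ⊕ (Fin mm ⊕ Unit)

/-- The Set Cover instance: a single college `w` accepting everybody;
`τ_{s_i}[z] = 1` iff (`z ∈ [n*]` and `x_z ∈ S_i`) or `z = n* + i`;
`τ_{d_i}[z] = 1` iff (`n* < z ≤ n* + m*` and `z ≠ n* + i`) or `z = n* + m* + 1`;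
`w`'s strict preference list is `s_1 ≻ d_1 ≻ s_2 ≻ d_2 ≻ ⋯`;
`ℓ_w[z] = 1` for element types and `k` for the remaining ones; `u_w ≡ k`;
`q_w = 2k`. -/
def SCInst (nn mm k : ℕ) (SS : Fin mm → Finset (Fin nn)) :
    SMTI (SCSt mm) Unit (SCTy nn mm) where
  acc := fun _ _ => True
  tau := fun st t =>
    match st, t with
    | Sum.inl i, Sum.inl z => decide (z ∈ SS i)
    | Sum.inl i, Sum.inr (Sum.inl i') => decide (i' = i)
    | Sum.inl _, Sum.inr (Sum.inr _) => false
    | Sum.inr _, Sum.inl _ => false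
    | Sum.inr i, Sum.inr (Sum.inl i') => decide (i' ≠ i)
    | Sum.inr _, Sum.inr (Sum.inr _) => true
  rankS := fun _ _ => 0
  rankC := fun _ st =>
    match st with
    | Sum.inl i => 2 * (i : ℕ)
    | Sum.inr i => 2 * (i : ℕ) + 1
  lq := fun _ t =>
    match t with
    | Sum.inl _ => 1
    | Sum.inr _ => k
  uq := fun _ _ => k
  cap := fun _ => 2 * k

end SetCover

/-! Write `A` and `B` for the indices of the set- and dummy-students in a set `M` of students
placed at `w`. The dummy type `n*+m*+1` forces `|B| = k`; the load of the type of set `i` is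
`[i ∈ A] + |B \ {i}|`, and requiring it to be exactly `k` forces `i ∈ A ↔ i ∈ B`. So `M` meets
`w`'s quotas exactly when `A = B` is a set cover of size `k` (and then `|M| = 2k` fits the
capacity); covers of size `≤ k` pad up to size `k` because `k < m*`.

Every feasible matching is stable: a blocking pair `{u, w}` would yield a set within the quotas
that contains the unmatched `u` and otherwise only matched students. Such a set contains the
partner of `u` (`s_i ↔ d_i`), which is therefore matched, and then so is `u`. -/

namespace Finset

theorem exists_card_le_iff_exists_card_eq {α : Type*} [Fintype α] {P : Finset α → Prop}
    (hP : Monotone P) {k : ℕ} (hk : k ≤ Fintype.card α) :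
    (∃ s : Finset α, #s ≤ k ∧ P s) ↔ ∃ s : Finset α, #s = k ∧ P s := by
  refine ⟨fun ⟨s, hs, hPs⟩ => ?_, fun ⟨s, hs, hPs⟩ => ⟨s, hs.le, hPs⟩⟩
  obtain ⟨t, hst, -, ht⟩ := exists_subsuperset_card_eq (subset_univ s) hs (by simpa using hk)
  exact ⟨t, ht, hP hst hPs⟩

end Finset

namespace SMTI

variable {S C T : Type} [Fintype S] [Fintype C] [Fintype T] (I : SMTI S C T)

def load (M : Finset S) (z : T) : ℕ :=
  ∑ u ∈ M, (I.tau u z).toNat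

def WithinQuotas (w : C) (M : Finset S) : Prop :=
  ∀ z, I.lq w z ≤ I.load M z ∧ I.load M z ≤ I.uq w z

variable {I}

theorem BlocksWith.withinQuotas {f : S → Option C} {u : S} {w : C} {U' : Finset S}
    (h : I.BlocksWith f u w U') : I.WithinQuotas w (insert u (I.assigned f w \ U')) := by
  obtain ⟨hne, -, -, -, -, -, hquota⟩ := h
  have hu : u ∉ I.assigned f w \ U' := by simp [assigned, hne]
  simpa only [WithinQuotas, load, Finset.sum_insert hu] using hquota

theorem stable_of_forall_not_withinQuotas {f : S → Option C}
    (h : ∀ u w (M : Finset S), f u ≠ some w → u ∈ M → (∀ v ∈ M, v ≠ u → f v = some w) →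
      ¬ I.WithinQuotas w M) :
    I.Stable f := by
  rintro u w ⟨U', hb⟩
  refine h u w _ hb.1 (Finset.mem_insert_self _ _) (fun v hv hvu => ?_) hb.withinQuotas
  have hv' := (Finset.mem_sdiff.mp ((Finset.mem_insert.mp hv).resolve_left hvu)).1
  simpa [assigned] using hv'

end SMTI

namespace SCInst

open Finset

variable {nn mm k : ℕ} {SS : Fin mm → Finset (Fin nn)}

theorem load_elem (M : Finset (SCSt mm)) (z : Fin nn) :
    (SCInst nn mm k SS).load M (.inl z) = #{i ∈ M.toLeft | z ∈ SS i} := by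
  simp only [SMTI.load, sum_sum_eq_sum_toLeft_add_sum_toRight, SCInst, Bool.toNat,
    Bool.cond_decide, card_filter]
  simp

theorem load_set (M : Finset (SCSt mm)) (i : Fin mm) :
    (SCInst nn mm k SS).load M (.inr (.inl i)) =
      (if i ∈ M.toLeft then 1 else 0) + #(M.toRight.erase i) := by
  simp only [SMTI.load, sum_sum_eq_sum_toLeft_add_sum_toRight, SCInst, Bool.toNat,
    Bool.cond_decide, sum_ite_eq, ← filter_ne', card_filter, ne_eq, ite_not, eq_comm]

theorem load_dummy (M : Finset (SCSt mm)) (t : Unit) :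
    (SCInst nn mm k SS).load M (.inr (.inr t)) = #M.toRight := by
  simp [SMTI.load, sum_sum_eq_sum_toLeft_add_sum_toRight, SCInst]

theorem withinQuotas_iff_loads {M : Finset (SCSt mm)} :
    (SCInst nn mm k SS).WithinQuotas () M ↔
      (∀ x, 1 ≤ #{i ∈ M.toLeft | x ∈ SS i} ∧ #{i ∈ M.toLeft | x ∈ SS i} ≤ k) ∧
      (∀ i, (if i ∈ M.toLeft then 1 else 0) + #(M.toRight.erase i) = k) ∧ #M.toRight = k := by
  simp only [SMTI.WithinQuotas, Sum.forall, load_elem, load_set, load_dummy]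
  simp [SCInst, le_antisymm_iff, and_comm]

theorem withinQuotas_iff {M : Finset (SCSt mm)} :
    (SCInst nn mm k SS).WithinQuotas () M ↔
      M.toLeft = M.toRight ∧ #M.toRight = k ∧ ∀ x, ∃ i ∈ M.toLeft, x ∈ SS i := by
  rw [withinQuotas_iff_loads]
  constructor
  · rintro ⟨helem, hset, hdummy⟩
    refine ⟨?_, hdummy, fun x => ?_⟩
    · ext i
      have hi := hset i
      by_cases hR : i ∈ M.toRight
      · have := card_erase_add_one hR
        simp only [hR, iff_true]
        by_contra hL
        simp only [hL, if_false] at hi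
        omega
      · rw [erase_eq_of_notMem hR, hdummy] at hi
        simp only [hR, iff_false]
        intro hL
        simp only [hL, if_true] at hi
        omega
    · obtain ⟨i, hi⟩ := card_pos.mp (helem x).1
      exact ⟨i, (mem_filter.mp hi).1, (mem_filter.mp hi).2⟩
  · rintro ⟨hLR, hcard, hcover⟩
    refine ⟨fun x => ⟨?_, ?_⟩, fun i => ?_, hcard⟩
    · obtain ⟨i, hi, hx⟩ := hcover x
      exact card_pos.mpr ⟨i, mem_filter.mpr ⟨hi, hx⟩⟩
    · exact hLR ▸ hcard ▸ card_filter_le _ _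
    · rw [hLR]
      split_ifs with hi
      · have := card_erase_add_one hi
        omega
      · rw [erase_eq_of_notMem hi, hcard]; simp

theorem feasible_iff_withinQuotas {f : SCSt mm → Option Unit} :
    (SCInst nn mm k SS).Feasible f ↔
      (SCInst nn mm k SS).WithinQuotas () ((SCInst nn mm k SS).assigned f ()) := by
  refine ⟨fun h => (h ()).2, fun h => ?_⟩
  rintro ⟨⟩
  refine ⟨?_, h⟩
  obtain ⟨hLR, hcard, -⟩ := withinQuotas_iff.mp h
  rw [← card_toLeft_add_card_toRight, hLR, hcard]
  exact (two_mul k).ge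

theorem swap_mem_of_withinQuotas {M : Finset (SCSt mm)}
    (h : (SCInst nn mm k SS).WithinQuotas () M) {u : SCSt mm} (hu : u ∈ M) : u.swap ∈ M := by
  obtain ⟨hLR, -, -⟩ := withinQuotas_iff.mp h
  rcases u with i | i
  · simpa [← mem_toRight, ← hLR] using hu
  · simpa [← mem_toLeft, hLR] using hu

theorem stable_of_feasible {f : SCSt mm → Option Unit} (hf : (SCInst nn mm k SS).Feasible f) :
    (SCInst nn mm k SS).Stable f := by
  refine SMTI.stable_of_forall_not_withinQuotas fun u w M hfu huM hM hquota => ?_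
  cases w
  have hswap : u.swap ∈ (SCInst nn mm k SS).assigned f () := by
    simpa [SMTI.assigned] using hM _ (swap_mem_of_withinQuotas hquota huM) (by cases u <;> simp)
  have hu := swap_mem_of_withinQuotas (feasible_iff_withinQuotas.mp hf) hswap
  rw [Sum.swap_swap] at hu
  exact hfu (by simpa [SMTI.assigned] using hu)

theorem exists_feasible_iff :
    (∃ f, (SCInst nn mm k SS).IsMatching f ∧ (SCInst nn mm k SS).Feasible f) ↔
      ∃ A : Finset (Fin mm), #A = k ∧ ∀ x, ∃ i ∈ A, x ∈ SS i := by
  constructor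
  · rintro ⟨f, -, hf⟩
    obtain ⟨hLR, hcard, hcover⟩ := withinQuotas_iff.mp (feasible_iff_withinQuotas.mp hf)
    exact ⟨_, hLR ▸ hcard, hcover⟩
  · rintro ⟨A, hcard, hcover⟩
    let f : SCSt mm → Option Unit := fun u => if u ∈ A.disjSum A then some () else none
    have hM : (SCInst nn mm k SS).assigned f () = A.disjSum A := by ext u; simp [SMTI.assigned, f]
    refine ⟨f, fun _ _ _ => trivial, feasible_iff_withinQuotas.mpr ?_⟩
    rw [hM, withinQuotas_iff]
    simpa using ⟨hcard, hcover⟩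

end SCInst

theorem stmt19_general (nn mm k : ℕ) (SS : Fin mm → Finset (Fin nn))
    (hk2 : k < mm) :
    ((∃ Cov : Finset (Fin mm), Cov.card ≤ k ∧ ∀ x : Fin nn, ∃ i ∈ Cov, x ∈ SS i) ↔
      (∃ f : SCSt mm → Option Unit,
        (SCInst nn mm k SS).IsMatching f ∧ (SCInst nn mm k SS).Feasible f)) ∧
    ((∃ f : SCSt mm → Option Unit,
        (SCInst nn mm k SS).IsMatching f ∧ (SCInst nn mm k SS).Feasible f) ↔
      (∃ f : SCSt mm → Option Unit,
        (SCInst nn mm k SS).IsMatching f ∧ (SCInst nn mm k SS).Feasible f ∧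
        (SCInst nn mm k SS).Stable f)) := by
  have hcover_mono : Monotone fun A : Finset (Fin mm) => ∀ x, ∃ i ∈ A, x ∈ SS i :=
    fun A B hAB hA x => (hA x).imp fun i ⟨hi, hx⟩ => ⟨hAB hi, hx⟩
  refine ⟨?_, ⟨fun ⟨f, hm, hf⟩ => ⟨f, hm, hf, SCInst.stable_of_feasible hf⟩,
    fun ⟨f, hm, hf, _⟩ => ⟨f, hm, hf⟩⟩⟩
  rw [SCInst.exists_feasible_iff]
  exact Finset.exists_card_le_iff_exists_card_eq hcover_mono (by simpa using hk2.le)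

/-- For the Set Cover construction the following are
equivalent: (i) there is a set cover of size at most `k`; (ii) the constructed
instance admits a feasible matching; (iii) the constructed instance admits a
feasible and stable matching. -/
theorem stmt19 (nn mm k : ℕ) (SS : Fin mm → Finset (Fin nn))
    (hcover : ∀ x : Fin nn, ∃ i : Fin mm, x ∈ SS i)
    (hk1 : 1 ≤ k) (hk2 : k < mm) :
    ((∃ Cov : Finset (Fin mm), Cov.card ≤ k ∧ ∀ x : Fin nn, ∃ i ∈ Cov, x ∈ SS i) ↔
      (∃ f : SCSt mm → Option Unit,
        (SCInst nn mm k SS).IsMatching f ∧ (SCInst nn mm k SS).Feasible f)) ∧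
    ((∃ f : SCSt mm → Option Unit,
        (SCInst nn mm k SS).IsMatching f ∧ (SCInst nn mm k SS).Feasible f) ↔
      (∃ f : SCSt mm → Option Unit,
        (SCInst nn mm k SS).IsMatching f ∧ (SCInst nn mm k SS).Feasible f ∧
        (SCInst nn mm k SS).Stable f)) :=
  stmt19_general nn mm k SS hk2
end
end
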